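/- Suppose the nodes ξ_1,…,ξ_n are pairwise distinct and a_{i,l_i−1} ≠ 0 for all i. Then the Jacobian J_P(x) of the Prony map is invertible and its inverse equals J_P(x)^{−1} = diag(D_1^{−1},…,D_n^{−1}) · U(ξ_1, l_1+1, …, ξ_n, l_n+1)^{−1}, where D_i^{−1} is the (l_i+1)×(l_i+1) matrix equal to the identity except for its last column, which equals (0, −a_{i,0}/a_{i,l_i−1}, …, −a_{i,l_i−2}/a_{i,l_i−1}, 1/a_{i,l_i−1})^T. -/

import Mathlib

open scoped BigOperators

noncomputable section

/-- Offset of the `i`-th block of columns: the sum of the multiplicities of all previous blocks. -/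
def blockOff {n : ℕ} (L : Fin n → ℕ) (i : Fin n) : ℕ := ∑ i' ∈ Finset.Iio i, L i'

theorem blockOff_add_lt {n : ℕ} (L : Fin n → ℕ) (i : Fin n) {j : ℕ} (hj : j < L i) :
    blockOff L i + j < ∑ i', L i' := by
  have h1 : ∑ i' ∈ insert i (Finset.Iio i), L i' = ∑ i' ∈ Finset.Iio i, L i' + L i := by
    rw [Finset.sum_insert (by simp)]; ring
  have h2 : ∑ i' ∈ insert i (Finset.Iio i), L i' ≤ ∑ i', L i' :=
    Finset.sum_le_sum_of_subset (Finset.subset_univ _)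
  unfold blockOff
  omega

/-- The flattened index of position `j` inside block `i`, when block `i` has size `L i`. -/
def encC {n : ℕ} (L : Fin n → ℕ) (i : Fin n) (j : Fin (L i)) : Fin (∑ i', L i') :=
  ⟨blockOff L i + j, blockOff_add_lt L i j.isLt⟩

/-- The (square) confluent Vandermonde matrix on nodes `ξ_i` with multiplicities `L i`:
rows are indexed by `k = 0,…,(∑ L i)−1`; the entry in row `k` and column `j` of block `i`
is `(k)_j ξ_i^{k−j}` (zero when `j > k`). -/
def confVand {n : ℕ} (L : Fin n → ℕ) (ξ : Fin n → ℂ) :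
    Matrix (Fin (∑ i, L i)) (Fin (∑ i, L i)) ℂ :=
  fun k c => ∑ i, ∑ j : Fin (L i),
    if c = encC L i j then ((k : ℕ).descFactorial j : ℂ) * ξ i ^ ((k : ℕ) - (j : ℕ)) else 0

/-- The index (in the parameter vector) of the magnitude `a_{i,j}` (`j < l i`) or,
for `j = l i`, of the node `ξ_i`; the parameters are ordered
`(a_{1,0},…,a_{1,l_1−1}, ξ_1, …, a_{n,0},…,a_{n,l_n−1}, ξ_n)`. -/
def encP {n : ℕ} (l : Fin n → ℕ) (i : Fin n) (j : Fin (l i + 1)) :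
    Fin (∑ i', (l i' + 1)) :=
  encC (fun i' => l i' + 1) i j

/-- The parameter vector `x = (a_{1,0},…,a_{1,l_1−1}, ξ_1, …, a_{n,0},…,a_{n,l_n−1}, ξ_n)`. -/
def pronyParam {n : ℕ} (l : Fin n → ℕ) (ξ : Fin n → ℂ)
    (a : (i : Fin n) → Fin (l i) → ℂ) : Fin (∑ i', (l i' + 1)) → ℂ :=
  fun p => ∑ i, ∑ j : Fin (l i + 1),
    if p = encP l i j then (if h : (j : ℕ) < l i then a i ⟨j, h⟩ else ξ i) else 0

/-- The Prony map `P : ℂ^R → ℂ^R` sending the parameter vector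
`x = (a_{1,0},…,a_{1,l_1−1}, ξ_1, …, a_{n,0},…,a_{n,l_n−1}, ξ_n)` to the moment vector
`(m_0,…,m_{R−1})`, `m_k = Σ_i Σ_{j<l_i} a_{i,j} (k)_j ξ_i^{k−j}`. -/
def pronyMap {n : ℕ} (l : Fin n → ℕ) (x : Fin (∑ i', (l i' + 1)) → ℂ) :
    Fin (∑ i', (l i' + 1)) → ℂ :=
  fun k => ∑ i, ∑ j : Fin (l i),
    x (encP l i (Fin.castSucc j)) * ((k : ℕ).descFactorial j : ℂ) *
      (x (encP l i (Fin.last (l i)))) ^ ((k : ℕ) - (j : ℕ))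

/-- The Jacobian matrix of the Prony map at `x`: the `(k,p)` entry is the partial
derivative of the `k`-th moment with respect to the `p`-th parameter. -/
def pronyJacobian {n : ℕ} (l : Fin n → ℕ) (x : Fin (∑ i', (l i' + 1)) → ℂ) :
    Matrix (Fin (∑ i', (l i' + 1))) (Fin (∑ i', (l i' + 1))) ℂ :=
  fun k p => deriv (fun t : ℂ => pronyMap l (Function.update x p t) k) (x p)

/-- The block-diagonal matrix `diag(D_1⁻¹,…,D_n⁻¹)`, where `D_i⁻¹` is the
`(l_i+1)×(l_i+1)` identity matrix except for its last column, which is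
`(0, −a_{i,0}/a_{i,l_i−1}, …, −a_{i,l_i−2}/a_{i,l_i−1}, 1/a_{i,l_i−1})ᵀ`. -/
def diagDinv {n : ℕ} (l : Fin n → ℕ) (a : (i : Fin n) → Fin (l i) → ℂ) :
    Matrix (Fin (∑ i', (l i' + 1))) (Fin (∑ i', (l i' + 1))) ℂ :=
  fun r c => ∑ i, ∑ s : Fin (l i + 1), ∑ t : Fin (l i + 1),
    if r = encP l i s ∧ c = encP l i t then
      (if (t : ℕ) = l i then
        (if hs0 : (s : ℕ) = 0 then 0
        else if hsl : (s : ℕ) = l i then 1 / a i ⟨l i - 1, by omega⟩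
        else -(a i ⟨(s : ℕ) - 1, by have := s.isLt; omega⟩) /
              a i ⟨l i - 1, by have := s.isLt; omega⟩)
      else if (s : ℕ) = (t : ℕ) then 1 else 0)
    else 0

/-!
Order the parameters block by block. In the `i`-th block, the partial derivatives with respect to
the magnitudes `a_{i,j}` are the columns `(k)_j ξ_i^{k-j}`, `j < l_i`, of the confluent Vandermonde
matrix `U`, while the derivative with respect to `ξ_i` is `∑_j a_{i,j}` times column `j + 1` of `U`.
So `J_P = U · diag(D_1, …, D_n)`, where `D_i` is the identity except for its last column
`(0, a_{i,0}, …, a_{i,l_i-1})`, which is invertible exactly because `a_{i,l_i-1} ≠ 0`; we check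
`J_P · diag(D_i⁻¹) = U` column by column. Finally `U` is invertible for distinct nodes: a vector
`v` with `Uᵀ v = 0` is the coefficient vector of a polynomial of degree `< ∑ (l_i + 1)` vanishing
to order `l_i + 1` at every `ξ_i`.
-/

theorem Fintype.sum_sum_ite_sigma_mk_eq {ι : Type*} {κ : ι → Type*} [Fintype ι]
    [∀ i, Fintype (κ i)] [DecidableEq ι] [∀ i, DecidableEq (κ i)] {M : Type*}
    [AddCommMonoid M] (F : (i : ι) → κ i → M) (i₀ : ι) (j₀ : κ i₀) :
    ∑ i, ∑ j, (if (⟨i₀, j₀⟩ : Σ i, κ i) = ⟨i, j⟩ then F i j else 0) = F i₀ j₀ := by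
  rw [← Fintype.sum_sigma (fun q : Σ i, κ i => if ⟨i₀, j₀⟩ = q then F q.1 q.2 else 0)]
  exact Fintype.sum_ite_eq _ _

section BlockIndex

variable {n : ℕ} (L : Fin n → ℕ)

theorem blockOff_eq_sum_castLE (i : Fin n) :
    blockOff L i = ∑ j : Fin i, L (Fin.castLE i.2.le j) := by
  symm
  apply Finset.sum_nbij (Fin.castLE i.2.le)
  · intro j _
    simp [Fin.lt_def]
  · intro j _ j' _ h
    simpa [Fin.ext_iff] using h
  · intro k hk
    simp only [Finset.coe_Iio, Set.mem_Iio] at hk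
    exact ⟨⟨k, hk⟩, by simp, Fin.ext rfl⟩
  · intro _ _
    rfl

theorem encC_eq_finSigmaFinEquiv (i : Fin n) (j : Fin (L i)) :
    encC L i j = finSigmaFinEquiv ⟨i, j⟩ :=
  Fin.ext (by simp [encC, blockOff_eq_sum_castLE])

theorem encC_inj_iff {i i' : Fin n} {j : Fin (L i)} {j' : Fin (L i')} :
    encC L i j = encC L i' j' ↔ (⟨i, j⟩ : Σ i, Fin (L i)) = ⟨i', j'⟩ := by
  rw [encC_eq_finSigmaFinEquiv, encC_eq_finSigmaFinEquiv, finSigmaFinEquiv.injective.eq_iff]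

theorem sum_encC {M : Type*} [AddCommMonoid M] (g : Fin (∑ i, L i) → M) :
    ∑ p, g p = ∑ i, ∑ j : Fin (L i), g (encC L i j) := by
  simp only [encC_eq_finSigmaFinEquiv]
  exact (finSigmaFinEquiv.sum_comp g).symm.trans (Fintype.sum_sigma _)

theorem exists_encC_eq (p : Fin (∑ i, L i)) : ∃ i, ∃ j : Fin (L i), encC L i j = p := by
  obtain ⟨⟨i, j⟩, rfl⟩ := finSigmaFinEquiv.surjective p
  exact ⟨i, j, encC_eq_finSigmaFinEquiv L i j⟩

end BlockIndex

theorem sum_sum_ite_encC_eq {n : ℕ} (L : Fin n → ℕ) {M : Type*} [AddCommMonoid M]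
    (F : (i : Fin n) → Fin (L i) → M) (i₀ : Fin n) (j₀ : Fin (L i₀)) :
    ∑ i, ∑ j, (if encC L i₀ j₀ = encC L i j then F i j else 0) = F i₀ j₀ := by
  simp only [encC_inj_iff]
  exact Fintype.sum_sum_ite_sigma_mk_eq F i₀ j₀

theorem confVand_apply_encC {n : ℕ} (L : Fin n → ℕ) (ξ : Fin n → ℂ) (k : Fin (∑ i, L i))
    (i : Fin n) (j : Fin (L i)) :
    confVand L ξ k (encC L i j) = ((k : ℕ).descFactorial j : ℂ) * ξ i ^ ((k : ℕ) - j) :=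
  sum_sum_ite_encC_eq L _ i j

theorem confVand_apply_encP {n : ℕ} (l : Fin n → ℕ) (ξ : Fin n → ℂ)
    (k : Fin (∑ i, (l i + 1))) (i : Fin n) (s : Fin (l i + 1)) :
    confVand (fun i => l i + 1) ξ k (encP l i s) =
      ((k : ℕ).descFactorial s : ℂ) * ξ i ^ ((k : ℕ) - s) :=
  confVand_apply_encC _ ξ k i s

theorem pronyParam_apply_encP {n : ℕ} (l : Fin n → ℕ) (ξ : Fin n → ℂ)
    (a : (i : Fin n) → Fin (l i) → ℂ) (i : Fin n) (s : Fin (l i + 1)) :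
    pronyParam l ξ a (encP l i s) = if h : (s : ℕ) < l i then a i ⟨s, h⟩ else ξ i :=
  sum_sum_ite_encC_eq (fun i' => l i' + 1) _ i s

theorem sum_encP {n : ℕ} (l : Fin n → ℕ) {M : Type*} [AddCommMonoid M]
    (g : Fin (∑ i, (l i + 1)) → M) : ∑ p, g p = ∑ i, ∑ s, g (encP l i s) :=
  sum_encC _ g

-- The block `D_i⁻¹` of `diagDinv`, spelled exactly as there so that the two agree definitionally.
def dinvBlock {m : ℕ} (a : Fin m → ℂ) : Matrix (Fin (m + 1)) (Fin (m + 1)) ℂ :=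
  fun s t =>
    if (t : ℕ) = m then
      (if hs0 : (s : ℕ) = 0 then 0
      else if hsl : (s : ℕ) = m then 1 / a ⟨m - 1, by omega⟩
      else -(a ⟨(s : ℕ) - 1, by have := s.isLt; omega⟩) /
            a ⟨m - 1, by have := s.isLt; omega⟩)
    else if (s : ℕ) = (t : ℕ) then 1 else 0

theorem diagDinv_apply_encP {n : ℕ} (l : Fin n → ℕ) (a : (i : Fin n) → Fin (l i) → ℂ)
    (i i' : Fin n) (s : Fin (l i + 1)) (t : Fin (l i' + 1)) :
    diagDinv l a (encP l i s) (encP l i' t) =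
      Matrix.blockDiagonal' (fun i => dinvBlock (a i)) ⟨i, s⟩ ⟨i', t⟩ := by
  simp only [diagDinv, encP, encC_inj_iff, ite_and, Finset.sum_ite_irrel, Finset.sum_const_zero,
    Fintype.sum_sum_ite_sigma_mk_eq]
  by_cases h : i = i'
  · subst h
    simp only [Sigma.mk.inj_iff, heq_eq_eq, true_and, Fintype.sum_ite_eq,
      Matrix.blockDiagonal'_apply_eq]
    rfl
  · simp [Ne.symm h, Matrix.blockDiagonal'_apply_ne _ _ _ h]

theorem mul_diagDinv_apply_encP {n : ℕ} (l : Fin n → ℕ) (a : (i : Fin n) → Fin (l i) → ℂ)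
    {κ : Type*} (M : Matrix κ (Fin (∑ i, (l i + 1))) ℂ) (k : κ) (i : Fin n)
    (t : Fin (l i + 1)) :
    (M * diagDinv l a) k (encP l i t) = ∑ s, M k (encP l i s) * dinvBlock (a i) s t := by
  rw [Matrix.mul_apply, sum_encP, Finset.sum_eq_single i]
  · simp only [diagDinv_apply_encP, Matrix.blockDiagonal'_apply_eq]
  · intro i' _ hi'
    simp only [diagDinv_apply_encP, Matrix.blockDiagonal'_apply_ne _ _ _ hi', mul_zero,
      Finset.sum_const_zero]
  · simp

theorem vecMul_update_last_dinvBlock {m : ℕ} (hm : 1 ≤ m) (a : Fin m → ℂ)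
    (ha : a ⟨m - 1, by omega⟩ ≠ 0) (v : Fin (m + 1) → ℂ) :
    Matrix.vecMul (Function.update v (Fin.last m) (∑ j, a j * v j.succ)) (dinvBlock a) = v := by
  ext t
  rw [Matrix.vecMul, dotProduct]
  by_cases ht : t = Fin.last m
  · subst ht
    obtain ⟨m, rfl⟩ : ∃ m', m = m' + 1 := ⟨m - 1, by omega⟩
    set A := a (Fin.last m)
    have hA : A ≠ 0 := ha
    have hzero : dinvBlock a 0 (Fin.last (m + 1)) = 0 := by simp [dinvBlock]
    have hmid (i : Fin m) :
        dinvBlock a i.castSucc.succ (Fin.last (m + 1)) = -a i.castSucc / A := by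
      simp only [dinvBlock, Fin.last, Fin.val_succ, Fin.val_castSucc,
        Nat.add_right_cancel_iff, Nat.add_eq_zero_iff, one_ne_zero, and_false, i.isLt.ne,
        add_tsub_cancel_right, A, ↓reduceIte, ↓reduceDIte]
      rfl
    have htop : dinvBlock a (Fin.last (m + 1)) (Fin.last (m + 1)) = 1 / A := by
      simp [dinvBlock, A, Fin.last]
    rw [Fin.sum_univ_castSucc (fun j => a j * v j.succ), Fin.sum_univ_succ, Fin.sum_univ_castSucc]
    have hne (i : Fin m) : i.castSucc.succ ≠ Fin.last (m + 1) := by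
      simp [Fin.ext_iff, i.isLt.ne]
    simp only [hzero, hmid, Fin.succ_last, htop, Function.update_self, mul_zero, zero_add,
      Function.update_of_ne (hne _)]
    have hcancel : ∑ i : Fin m, v i.castSucc.succ * (-a i.castSucc / A) =
        -(∑ i : Fin m, a i.castSucc * v i.castSucc.succ) / A := by
      rw [neg_div, Finset.sum_div, ← Finset.sum_neg_distrib]
      exact Finset.sum_congr rfl fun i _ => by ring
    rw [hcancel]
    field_simp
    ring
  · have ht' : (t : ℕ) ≠ m := fun h => ht (Fin.ext h)
    simp only [dinvBlock, ht', if_false, Fin.val_inj, mul_ite, mul_one, mul_zero,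
      Finset.sum_ite_eq', Finset.mem_univ, if_true, Function.update_of_ne ht]

-- `y` lists the magnitudes `a_0, …, a_{m-1}` of one node, followed by the node itself.
def blockMoment {m : ℕ} (y : Fin (m + 1) → ℂ) (k : ℕ) : ℂ :=
  ∑ j : Fin m, y j.castSucc * (k.descFactorial j : ℂ) * y (Fin.last m) ^ (k - j)

theorem hasDerivAt_blockMoment_update_castSucc {m : ℕ} (y : Fin (m + 1) → ℂ) (j : Fin m)
    (k : ℕ) (t₀ : ℂ) :
    HasDerivAt (fun t => blockMoment (Function.update y j.castSucc t) k)
      ((k.descFactorial j : ℂ) * y (Fin.last m) ^ (k - j)) t₀ := by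
  have hterm (j' : Fin m) : HasDerivAt
      (fun t => Function.update y j.castSucc t j'.castSucc * (k.descFactorial j' : ℂ) *
        Function.update y j.castSucc t (Fin.last m) ^ (k - j'))
      (if j' = j then (k.descFactorial j : ℂ) * y (Fin.last m) ^ (k - j) else 0) t₀ := by
    simp only [Function.update_of_ne (Fin.castSucc_lt_last j).ne',
      Function.update_apply, Fin.castSucc_inj]
    split_ifs with h
    · subst h
      simpa using ((hasDerivAt_id t₀).mul_const _).mul_const (y (Fin.last m) ^ (k - j'))
    · exact hasDerivAt_const _ _
  simpa [blockMoment] using HasDerivAt.fun_sum (u := Finset.univ) fun j' _ => hterm j'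

theorem hasDerivAt_blockMoment_update_last {m : ℕ} (y : Fin (m + 1) → ℂ) (k : ℕ) (t₀ : ℂ) :
    HasDerivAt (fun t => blockMoment (Function.update y (Fin.last m) t) k)
      (∑ j : Fin m, y j.castSucc * (k.descFactorial (j + 1) : ℂ) * t₀ ^ (k - (j + 1))) t₀ := by
  have hterm (j : Fin m) : HasDerivAt
      (fun t => y j.castSucc * (k.descFactorial j : ℂ) * t ^ (k - j))
      (y j.castSucc * (k.descFactorial (j + 1) : ℂ) * t₀ ^ (k - (j + 1))) t₀ := by
    refine ((hasDerivAt_pow (k - j) t₀).const_mul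
      (y j.castSucc * (k.descFactorial j : ℂ))).congr_deriv ?_
    rw [Nat.descFactorial_succ, Nat.sub_sub]
    push_cast
    ring
  simpa [blockMoment, Function.update_of_ne (Fin.castSucc_lt_last _).ne] using
    HasDerivAt.fun_sum (u := Finset.univ) fun j _ => hterm j

section Jacobian

variable {n : ℕ} (l : Fin n → ℕ)

theorem encP_injective (i : Fin n) : Function.Injective (encP l i) := fun s s' h => by
  simpa using (encC_inj_iff _).1 h

theorem pronyMap_eq_sum_blockMoment (x : Fin (∑ i, (l i + 1)) → ℂ) (k : Fin (∑ i, (l i + 1))) :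
    pronyMap l x k = ∑ i, blockMoment (x ∘ encP l i) k :=
  rfl

theorem pronyMap_update_encP (x : Fin (∑ i, (l i + 1)) → ℂ) (i : Fin n) (s : Fin (l i + 1))
    (t : ℂ) (k : Fin (∑ i, (l i + 1))) :
    pronyMap l (Function.update x (encP l i s) t) k =
      blockMoment (Function.update (x ∘ encP l i) s t) k +
        ∑ i' ∈ Finset.univ.erase i, blockMoment (x ∘ encP l i') k := by
  rw [pronyMap_eq_sum_blockMoment, ← Finset.add_sum_erase _ _ (Finset.mem_univ i),
    Function.update_comp_eq_of_injective _ (encP_injective l i)]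
  congr 1
  refine Finset.sum_congr rfl fun i' hi' => ?_
  rw [Function.update_comp_eq_of_forall_ne]
  intro s' h
  exact (Finset.ne_of_mem_erase hi') (congrArg Sigma.fst ((encC_inj_iff _).1 h))

theorem pronyJacobian_apply_encP (x : Fin (∑ i, (l i + 1)) → ℂ) (k : Fin (∑ i, (l i + 1)))
    (i : Fin n) (s : Fin (l i + 1)) :
    pronyJacobian l x k (encP l i s) =
      deriv (fun t => blockMoment (Function.update (x ∘ encP l i) s t) k) (x (encP l i s)) := by
  simp only [pronyJacobian, pronyMap_update_encP, deriv_add_const]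

theorem pronyJacobian_apply_encP_castSucc (x : Fin (∑ i, (l i + 1)) → ℂ)
    (k : Fin (∑ i, (l i + 1))) (i : Fin n) (j : Fin (l i)) :
    pronyJacobian l x k (encP l i j.castSucc) =
      ((k : ℕ).descFactorial j : ℂ) * x (encP l i (Fin.last (l i))) ^ ((k : ℕ) - j) := by
  rw [pronyJacobian_apply_encP]
  exact (hasDerivAt_blockMoment_update_castSucc _ j k _).deriv

theorem pronyJacobian_apply_encP_last (x : Fin (∑ i, (l i + 1)) → ℂ)
    (k : Fin (∑ i, (l i + 1))) (i : Fin n) :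
    pronyJacobian l x k (encP l i (Fin.last (l i))) =
      ∑ j : Fin (l i), x (encP l i j.castSucc) * ((k : ℕ).descFactorial (j + 1) : ℂ) *
        x (encP l i (Fin.last (l i))) ^ ((k : ℕ) - (j + 1)) := by
  rw [pronyJacobian_apply_encP]
  exact (hasDerivAt_blockMoment_update_last _ k _).deriv

end Jacobian

namespace Polynomial

theorem eq_zero_of_forall_isRoot_iterate_derivative {K ι : Type*} [Field K] [CharZero K]
    [Fintype ι] {ξ : ι → K} (hξ : Function.Injective ξ) (L : ι → ℕ) {p : K[X]}
    (hdeg : p.degree < (∑ i, L i : ℕ)) (hroot : ∀ i, ∀ m < L i, (derivative^[m] p).IsRoot (ξ i)) :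
    p = 0 := by
  by_contra hp
  have hmult (i : ι) : L i ≤ p.rootMultiplicity (ξ i) := by
    rcases Nat.eq_zero_or_pos (L i) with h | h
    · simp [h]
    · exact Nat.le_of_pred_lt <| lt_rootMultiplicity_of_isRoot_iterate_derivative hp
        fun m hm => hroot i m (by rw [Nat.pred_eq_sub_one] at hm; omega)
  have hdvd : ∏ i, (X - C (ξ i)) ^ L i ∣ p :=
    Fintype.prod_dvd_of_coprime (fun i j hij => (pairwise_coprime_X_sub_C hξ hij).pow)
      fun i => (le_rootMultiplicity_iff hp).1 (hmult i)
  have hprod : (∏ i, (X - C (ξ i)) ^ L i).natDegree = ∑ i, L i := by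
    rw [natDegree_prod_of_monic _ _ fun i _ => (monic_X_sub_C _).pow _]
    simp
  have := natDegree_le_of_dvd hdvd hp
  have := (natDegree_lt_iff_degree_lt hp).2 hdeg
  omega

theorem eval_iterate_derivative_ofFn {R : Type*} [CommRing R] [DecidableEq R] {N : ℕ}
    (v : Fin N → R) (m : ℕ) (z : R) :
    (derivative^[m] (ofFn N v)).eval z =
      ∑ k : Fin N, ((k : ℕ).descFactorial m : R) * z ^ ((k : ℕ) - m) * v k := by
  simp only [ofFn_eq_sum_monomial, iterate_derivative_sum, eval_finsetSum,
    ← C_mul_X_pow_eq_monomial, iterate_derivative_C_mul, iterate_derivative_X_pow_eq_C_mul, eval_mul, eval_C, eval_pow, eval_X]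
  exact Finset.sum_congr rfl fun k _ => by ring

end Polynomial

open Polynomial in
theorem confVand_det_ne_zero {n : ℕ} (L : Fin n → ℕ) {ξ : Fin n → ℂ}
    (hξ : Function.Injective ξ) : (confVand L ξ).det ≠ 0 := by
  classical
  intro h0
  rw [← Matrix.det_transpose] at h0
  obtain ⟨v, hv, hmul⟩ := Matrix.exists_mulVec_eq_zero_iff.mpr h0
  have hp : ofFn _ v = 0 := by
    refine eq_zero_of_forall_isRoot_iterate_derivative hξ L (ofFn_degree_lt v) fun i m hm => ?_
    have hrow := congrFun hmul (encC L i ⟨m, hm⟩)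
    simp only [Matrix.mulVec, dotProduct, Matrix.transpose_apply, confVand_apply_encC,
      Pi.zero_apply] at hrow
    rwa [IsRoot, eval_iterate_derivative_ofFn]
  exact hv (injective_ofFn _ (hp.trans (map_zero _).symm))

theorem pronyJacobian_mul_diagDinv {n : ℕ} (l : Fin n → ℕ) (hl : ∀ i, 1 ≤ l i)
    (ξ : Fin n → ℂ) (a : (i : Fin n) → Fin (l i) → ℂ)
    (hhigh : ∀ i, a i ⟨l i - 1, Nat.sub_lt (hl i) Nat.one_pos⟩ ≠ 0) :
    pronyJacobian l (pronyParam l ξ a) * diagDinv l a = confVand (fun i => l i + 1) ξ := by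
  ext k c
  obtain ⟨i, t, rfl⟩ := exists_encC_eq _ c
  set U := confVand (fun i => l i + 1) ξ
  have hcol : (fun s => pronyJacobian l (pronyParam l ξ a) k (encP l i s)) =
      Function.update (fun s => U k (encP l i s)) (Fin.last (l i))
        (∑ j, a i j * U k (encP l i j.succ)) := by
    ext s
    induction s using Fin.lastCases with
    | last =>
      rw [Function.update_self, pronyJacobian_apply_encP_last]
      simp [U, pronyParam_apply_encP, confVand_apply_encP, mul_assoc]
    | cast j =>
      rw [Function.update_of_ne (Fin.castSucc_lt_last j).ne, pronyJacobian_apply_encP_castSucc]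
      simp [U, pronyParam_apply_encP, confVand_apply_encP]
  have hblock := congrFun (vecMul_update_last_dinvBlock (hl i) (a i) (hhigh i)
    (fun s => U k (encP l i s))) t
  rw [← hcol] at hblock
  exact (mul_diagDinv_apply_encP l a _ k i t).trans hblock

/-- if the nodes are pairwise distinct and the highest magnitudes are
nonzero, then the Jacobian of the Prony map is invertible and
`J_P(x)⁻¹ = diag(D_1⁻¹,…,D_n⁻¹) · U(ξ_1,l_1+1,…,ξ_n,l_n+1)⁻¹`. -/
theorem pronyJacobian_inverse
    (n : ℕ) (l : Fin n → ℕ) (hl : ∀ i, 1 ≤ l i)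
    (ξ : Fin n → ℂ) (a : (i : Fin n) → Fin (l i) → ℂ)
    (hdist : ∀ i j : Fin n, i ≠ j → ξ i ≠ ξ j)
    (hhigh : ∀ i, a i ⟨l i - 1, by have := hl i; omega⟩ ≠ 0) :
    IsUnit (pronyJacobian l (pronyParam l ξ a)) ∧
      (pronyJacobian l (pronyParam l ξ a))⁻¹ =
        diagDinv l a * (confVand (fun i => l i + 1) ξ)⁻¹ := by
  have hU : IsUnit (confVand (fun i => l i + 1) ξ).det :=
    (confVand_det_ne_zero _ (Function.injective_iff_pairwise_ne.2 fun i j => hdist i j)).isUnit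
  have hright : pronyJacobian l (pronyParam l ξ a) *
      (diagDinv l a * (confVand (fun i => l i + 1) ξ)⁻¹) = 1 := by
    rw [← Matrix.mul_assoc, pronyJacobian_mul_diagDinv l hl ξ a hhigh, Matrix.mul_nonsing_inv _ hU]
  exact ⟨(Matrix.isUnit_iff_isUnit_det _).2 (Matrix.isUnit_det_of_right_inverse hright),
     Matrix.inv_eq_right_inv hright⟩
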